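/- Let p ≥ 3 and d ≥ 1 be natural numbers with gcd(d, p) = 1, and let q be a real number with q > φ and ∑_{k=0}^∞ f_{pk}/q^{pk} ≥ 2. Set z = q e^{2πi d/p}. Then the set R_∞(z) := { ∑_{k=0}^∞ u_k f_k / z^k : u ∈ {0,1}^ℕ } contains an open ball in ℂ centered at the origin. In particular, for ω = 2πd/p the asymptotic reachable workspace W_{∞,q,ω} := { ∑_{k=0}^∞ u_k (f_k/q^k) e^{-iω ∑_{j=0}^k v_j} : u, v ∈ {0,1}^ℕ }, which contains R_∞(z) (take v ≡ 1), contains a neighborhood of the origin. -/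

import Mathlib

/-- The Fibonacci-like sequence with `f 0 = f 1 = 1`. -/
def fib1 : ℕ → ℕ
  | 0 => 1
  | 1 => 1
  | n + 2 => fib1 (n + 1) + fib1 n

/-- The golden ratio. -/
noncomputable def phi : ℝ := (1 + Real.sqrt 5) / 2

lemma fib1_eq_fib (n : ℕ) : fib1 n = Nat.fib (n + 1) := by
  induction n using Nat.strong_induction_on with
  | _ n ih =>
    match n with
    | 0 => rfl
    | 1 => rfl
    | n + 2 =>
      rw [fib1, ih (n+1) (by omega), ih n (by omega)]
      have h : n + 2 + 1 = n + 1 + 2 := rfl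
      rw [h, Nat.fib_add_two (n := n+1)]
      exact Nat.add_comm _ _

lemma fib1_pos (n : ℕ) : 1 ≤ fib1 n := by
  rw [fib1_eq_fib]; exact Nat.fib_pos.2 (by omega)

lemma fib1_mul_le (m n : ℕ) : fib1 m * fib1 n ≤ fib1 (m + n) := by
  rw [fib1_eq_fib, fib1_eq_fib, fib1_eq_fib, Nat.fib_add m n]
  exact Nat.le_add_left _ _

lemma one_lt_phi : 1 < phi := by
  have h5 : (1:ℝ) < Real.sqrt 5 := by
    rw [show (1:ℝ) = Real.sqrt 1 by simp]
    exact Real.sqrt_lt_sqrt (by norm_num) (by norm_num)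
  unfold phi; linarith

lemma phi_sq : phi ^ 2 = phi + 1 := by
  have h5 : Real.sqrt 5 ^ 2 = 5 := Real.sq_sqrt (by norm_num)
  unfold phi; nlinarith

lemma fib1_le_phi_pow (n : ℕ) : (fib1 n : ℝ) ≤ phi ^ n := by
  induction n using Nat.strong_induction_on with
  | _ n ih =>
    match n with
    | 0 => simp [fib1]
    | 1 => simpa [fib1] using one_lt_phi.le
    | n + 2 =>
      have h1 := ih (n+1) (by omega)
      have h0 := ih n (by omega)
      have : (fib1 (n+2) : ℝ) = fib1 (n+1) + fib1 n := by rw [fib1]; push_cast; ring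
      rw [this]
      have hp : (0:ℝ) < phi ^ n := pow_pos (by linarith [one_lt_phi]) n
      calc (fib1 (n+1) : ℝ) + fib1 n ≤ phi ^ (n+1) + phi ^ n := by linarith
        _ = phi ^ n * (phi + 1) := by ring
        _ = phi ^ n * phi ^ 2 := by rw [phi_sq]
        _ = phi ^ (n+2) := by ring

/-- Kakeya / greedy interval-filling lemma. -/
lemma greedy {a : ℕ → ℝ} (ha : ∀ n, 0 ≤ a n) (hsum : Summable a)
    (hdom : ∀ n, a n ≤ ∑' j, a (j + (n + 1))) {t : ℝ} (ht0 : 0 ≤ t)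
    (ht : t ≤ ∑' n, a n) :
    ∃ u : ℕ → ℝ, (∀ n, u n = 0 ∨ u n = 1) ∧ HasSum (fun n => u n * a n) t := by
  set T : ℕ → ℝ := fun n => ∑' j, a (j + n) with hT
  have hTsum : ∀ n, Summable (fun j => a (j + n)) := fun n =>
    (summable_nat_add_iff n).2 hsum
  have hTsucc : ∀ n, T n = a n + T (n + 1) := by
    intro n
    have h0 := Summable.tsum_eq_zero_add (hTsum n)
    simp only [hT]
    rw [h0, Nat.zero_add]
    congr 1
    exact tsum_congr fun j => by rw [show j + 1 + n = j + (n + 1) by omega]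
  set s : ℕ → ℝ := fun n =>
    Nat.rec 0 (fun m sm => if sm + a m ≤ t then sm + a m else sm) n with hs
  have hssucc : ∀ n, s (n + 1) = if s n + a n ≤ t then s n + a n else s n :=
    fun n => rfl
  set u : ℕ → ℝ := fun n => if s n + a n ≤ t then 1 else 0 with hu
  have hinv : ∀ n, s n ≤ t ∧ t - s n ≤ T n := by
    intro n
    induction n with
    | zero =>
      constructor
      · simpa [hs] using ht0
      · simpa [hs, hT] using ht
    | succ n ih =>
      obtain ⟨h1, h2⟩ := ih
      rw [hssucc]
      by_cases hc : s n + a n ≤ t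
      · rw [if_pos hc]
        refine ⟨hc, ?_⟩
        have := hTsucc n
        linarith
      · rw [if_neg hc]
        push_neg at hc
        exact ⟨h1, by linarith [hdom n]⟩
  have hps : ∀ n, ∑ j ∈ Finset.range n, u j * a j = s n := by
    intro n
    induction n with
    | zero => simp [hs]
    | succ n ih =>
      rw [Finset.sum_range_succ, ih, hssucc, hu]
      by_cases hc : s n + a n ≤ t
      · simp only [if_pos hc]; ring
      · simp only [if_neg hc]; ring
  have hT0 : Filter.Tendsto T Filter.atTop (nhds 0) := tendsto_sum_nat_add a
  have hst : Filter.Tendsto s Filter.atTop (nhds t) := by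
    have hlow : Filter.Tendsto (fun n => t - T n) Filter.atTop (nhds t) := by
      simpa using Filter.Tendsto.sub (tendsto_const_nhds (x := t)) hT0
    exact tendsto_of_tendsto_of_tendsto_of_le_of_le hlow tendsto_const_nhds
      (fun n => by linarith [(hinv n).2]) (fun n => (hinv n).1)
  have hu01 : ∀ n, u n = 0 ∨ u n = 1 := by
    intro n; by_cases hc : s n + a n ≤ t
    · right; simp [hu, if_pos hc]
    · left; simp [hu, if_neg hc]
  have hsum2 : Summable (fun n => u n * a n) := by
    refine Summable.of_nonneg_of_le (fun n => ?_) (fun n => ?_) hsum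
    · rcases hu01 n with h | h <;> simp [h, ha n]
    · rcases hu01 n with h | h <;> simp [h, ha n]
  have hhs := hsum2.hasSum
  have htend := hhs.tendsto_sum_nat
  have : (∑' n, u n * a n) = t := by
    refine tendsto_nhds_unique ?_ hst
    exact (funext hps : (fun n => ∑ j ∈ Finset.range n, u j * a j) = s) ▸ htend
  exact ⟨u, hu01, this ▸ hhs⟩

theorem stmt6 (p d : ℕ) (hp : 3 ≤ p) (hd : 1 ≤ d) (hgcd : Nat.gcd d p = 1)
    (q : ℝ) (hq : phi < q)
    (hS : 2 ≤ ∑' k : ℕ, (fib1 (p * k) : ℝ) / q ^ (p * k)) :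
    let z : ℂ := (q : ℂ) * Complex.exp (2 * Real.pi * Complex.I * d / p)
    let ω : ℝ := 2 * Real.pi * d / p
    let R : Set ℂ := {x | ∃ u : ℕ → ℂ, (∀ n, u n = 0 ∨ u n = 1) ∧
      HasSum (fun k => u k * (fib1 k : ℂ) / z ^ k) x}
    let W : Set ℂ := {x | ∃ u v : ℕ → ℝ,
      (∀ n, u n = 0 ∨ u n = 1) ∧ (∀ n, v n = 0 ∨ v n = 1) ∧
      HasSum (fun k => ((u k * (fib1 k : ℝ) / q ^ k : ℝ) : ℂ) *
        Complex.exp (-Complex.I * (ω : ℂ) * ((∑ j ∈ Finset.range (k + 1), v j : ℝ) : ℂ))) x}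
    (∃ ε > 0, Metric.ball (0 : ℂ) ε ⊆ R) ∧ R ⊆ W ∧
      ∃ ε > 0, Metric.ball (0 : ℂ) ε ⊆ W := by
  intro z ω R W
  have hp0 : 0 < p := by omega
  have : NeZero p := ⟨by omega⟩
  have hq1 : (1:ℝ) < q := lt_trans one_lt_phi hq
  have hq0 : (0:ℝ) < q := by linarith
  have hqne : (q:ℝ) ≠ 0 := ne_of_gt hq0
  have hpR : ((p:ℝ)) ≠ 0 := Nat.cast_ne_zero.2 (by omega)
  -- the angle
  set θ : ℝ := 2 * Real.pi * d / p with hθdef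
  have hzdef : z = (q:ℂ) * Complex.exp ((θ:ℂ) * Complex.I) := by
    show (q:ℂ) * Complex.exp (2 * Real.pi * Complex.I * d / p) = _
    congr 1
    rw [hθdef]
    push_cast
    ring
  have hz0 : z ≠ 0 := by
    rw [hzdef]
    exact mul_ne_zero (by exact_mod_cast hqne) (Complex.exp_ne_zero _)
  have habsz : ‖z‖ = q := by
    rw [hzdef, norm_mul, Complex.norm_exp_ofReal_mul_I, mul_one, Complex.norm_real,
      Real.norm_eq_abs, abs_of_pos hq0]
  -- z ^ p = q ^ p
  have hexp_p : Complex.exp ((θ:ℂ) * Complex.I) ^ p = 1 := by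
    rw [← Complex.exp_nat_mul]
    have harg : (p:ℂ) * ((θ:ℂ) * Complex.I) = (d:ℤ) * (2 * Real.pi * Complex.I) := by
      have : (p:ℝ) * θ = d * (2 * Real.pi) := by
        rw [hθdef]; field_simp
      push_cast
      have := congrArg (Complex.ofReal) this
      push_cast at this
      calc (p:ℂ) * ((θ:ℂ) * Complex.I) = ((p:ℂ) * θ) * Complex.I := by ring
        _ = ((d:ℂ) * (2 * Real.pi)) * Complex.I := by rw [this]
        _ = (d:ℂ) * (2 * Real.pi * Complex.I) := by ring
    rw [harg]
    exact Complex.exp_int_mul_two_pi_mul_I d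
  have hzp : z ^ p = ((q:ℂ)) ^ p := by
    rw [hzdef, mul_pow, hexp_p, mul_one]
  -- w
  set w : ℂ := Complex.exp ((-θ:ℝ) * Complex.I) with hwdef
  have hwz : w * Complex.exp ((θ:ℂ) * Complex.I) = 1 := by
    rw [hwdef, ← Complex.exp_add]
    push_cast
    ring_nf
    exact Complex.exp_zero
  have hwzq : w * z = (q:ℂ) := by
    rw [hzdef]
    calc w * ((q:ℂ) * Complex.exp ((θ:ℂ) * Complex.I))
        = (q:ℂ) * (w * Complex.exp ((θ:ℂ) * Complex.I)) := by ring
      _ = (q:ℂ) := by rw [hwz, mul_one]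
  have hwim : w.im = -Real.sin θ := by
    rw [hwdef]
    simp [Complex.exp_im]
  have hsin : Real.sin θ ≠ 0 := by
    intro hcon
    rw [Real.sin_eq_zero_iff] at hcon
    obtain ⟨n, hn⟩ := hcon
    have hpi : Real.pi ≠ 0 := Real.pi_ne_zero
    rw [hθdef] at hn
    have hn' : (n:ℝ) * Real.pi * p = 2 * Real.pi * d := by
      have h := congrArg (fun x : ℝ => x * p) hn
      rwa [div_mul_cancel₀ _ hpR] at h
    have h2d : (n:ℝ) * p = 2 * d := by
      have hc : ((n:ℝ) * p - 2 * d) * Real.pi = 0 := by linear_combination hn'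
      rcases mul_eq_zero.mp hc with h | h
      · linarith
      · exact absurd h hpi
    have h2d' : n * (p:ℤ) = 2 * d := by exact_mod_cast h2d
    have hpdvd : (p:ℤ) ∣ 2 * (d:ℤ) := ⟨n, by linarith⟩
    have hpdvd' : p ∣ 2 * d := Int.ofNat_dvd.mp (by exact_mod_cast hpdvd)
    have hcop : Nat.Coprime p d := (Nat.coprime_comm.mp hgcd)
    have : p ∣ 2 := (Nat.Coprime.dvd_of_dvd_mul_right hcop hpdvd')
    have := Nat.le_of_dvd (by norm_num) this
    omega
  have hwim0 : w.im ≠ 0 := by rw [hwim]; simpa using hsin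
  have hw1 : w ≠ 1 := fun h => hwim0 (by rw [h]; simp)
  have hwp : w ^ p = 1 := by
    have := congrArg (· ^ p) hwz
    simp only [mul_pow, one_pow] at this
    rw [hexp_p, mul_one] at this
    exact this
  have hgeom : ∑ r ∈ Finset.range p, w ^ r = 0 := by
    rw [geom_sum_eq hw1, hwp]
    simp
  have hwabs : ‖w‖ = 1 := Complex.norm_exp_ofReal_mul_I _
  -- the real sequence g
  set g : ℕ → ℝ := fun n => (fib1 n : ℝ) / q ^ n with hg
  have hgpos : ∀ n, 0 < g n := fun n =>
    div_pos (by exact_mod_cast fib1_pos n) (pow_pos hq0 n)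
  have hgle : ∀ n, g n ≤ (phi / q) ^ n := by
    intro n
    rw [hg]
    simp only
    rw [div_pow]
    gcongr
    exact fib1_le_phi_pow n
  have hrat0 : (0:ℝ) ≤ phi / q := div_nonneg (by linarith [one_lt_phi]) hq0.le
  have hrat1 : phi / q < 1 := (div_lt_one hq0).2 hq
  have hgsum : Summable g :=
    Summable.of_nonneg_of_le (fun n => (hgpos n).le) hgle
      (summable_geometric_of_lt_one hrat0 hrat1)
  have hinj : ∀ r : ℕ, Function.Injective (fun k : ℕ => p * k + r) := by
    intro r k1 k2 h
    simp only at h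
    exact Nat.eq_of_mul_eq_mul_left hp0 (by omega)
  have hgsub : ∀ m : ℕ → ℕ, Function.Injective m → Summable (fun k => g (m k)) :=
    fun m hm => hgsum.comp_injective hm
  -- the sequence b of the hypothesis, and its tail bound
  set b : ℕ → ℝ := fun i => g (p * i) with hb
  have hbsum : Summable b := hgsub _ (fun k1 k2 h =>
    Nat.eq_of_mul_eq_mul_left hp0 h)
  have hb0 : b 0 = 1 := by
    rw [hb]
    show g (p * 0) = 1
    rw [mul_zero, hg]
    show (fib1 0 : ℝ) / q ^ 0 = 1
    norm_num [show fib1 0 = 1 from rfl]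
  have hbtail : 1 ≤ ∑' j, b (j + 1) := by
    have h0 := Summable.tsum_eq_zero_add hbsum
    have hSb : (2:ℝ) ≤ ∑' i, b i := hS
    rw [h0, hb0] at hSb
    linarith
  -- per-residue domination hypothesis for greedy
  have hdom : ∀ r : ℕ, ∀ n : ℕ, g (p * n + r) ≤ ∑' j, g (p * (j + (n + 1)) + r) := by
    intro r n
    have hterm : ∀ j : ℕ, g (p * n + r) * b (j + 1) ≤ g (p * (j + (n + 1)) + r) := by
      intro j
      have hfib : (fib1 (p * (j+1)) : ℝ) * fib1 (p * n + r) ≤ fib1 (p * (j + (n+1)) + r) := by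
        have := fib1_mul_le (p * (j+1)) (p * n + r)
        have hidx : p * (j+1) + (p * n + r) = p * (j + (n+1)) + r := by ring
        rw [hidx] at this
        exact_mod_cast this
      have hqpow : (q:ℝ) ^ (p * (j + (n+1)) + r) = q ^ (p * (j+1)) * q ^ (p * n + r) := by
        rw [← pow_add]; congr 1; ring
      rw [hg, hb]
      simp only
      rw [div_mul_div_comm, hqpow, mul_comm ((q:ℝ) ^ (p * n + r)) (q ^ (p * (j+1)))]
      gcongr
      calc (fib1 (p*n+r) : ℝ) * fib1 (p*(j+1)) = fib1 (p*(j+1)) * fib1 (p*n+r) := by ring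
        _ ≤ _ := hfib
    calc g (p * n + r) = g (p * n + r) * 1 := by ring
      _ ≤ g (p * n + r) * ∑' j, b (j + 1) :=
          mul_le_mul_of_nonneg_left hbtail (hgpos _).le
      _ = ∑' j, g (p * n + r) * b (j + 1) := (tsum_mul_left).symm
      _ ≤ ∑' j, g (p * (j + (n + 1)) + r) := by
          apply Summable.tsum_le_tsum hterm
          · exact (hbsum.comp_injective (fun a c h => by omega)).mul_left _
          · refine hgsub _ (fun a c h => ?_)
            have h2 : p * (a + (n+1)) = p * (c + (n+1)) := by omega
            have := Nat.eq_of_mul_eq_mul_left hp0 h2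
            omega
  -- the constant c and radius ε
  set c : ℝ := (q ^ (p - 1))⁻¹ with hc
  have hc0 : 0 < c := by positivity
  have hc1 : c ≤ 1 := by
    rw [hc]
    apply inv_le_one_of_one_le₀
    exact one_le_pow₀ hq1.le
  have hvim : 0 < |w.im| := abs_pos.2 hwim0
  set ε : ℝ := (c / 2) * |w.im| / (1 + |w.im|) with hε
  have hε0 : 0 < ε := by positivity
  have hkey : ε + ε / |w.im| = c / 2 := by
    rw [hε]
    field_simp
    ring
  -- MAIN PART 1 : ball ε ⊆ R
  have hball : Metric.ball (0 : ℂ) ε ⊆ R := by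
    intro x hx
    rw [Metric.mem_ball, dist_zero_right] at hx
    set β : ℝ := x.im / w.im with hβdef
    set α : ℝ := x.re - β * w.re with hαdef
    have hβeq : |β| = |x.im| / |w.im| := abs_div _ _
    have hxim : |x.im| ≤ ‖x‖ := Complex.abs_im_le_norm x
    have hxre : |x.re| ≤ ‖x‖ := Complex.abs_re_le_norm x
    have hwre : |w.re| ≤ 1 := by
      calc |w.re| ≤ ‖w‖ := Complex.abs_re_le_norm w
        _ = 1 := hwabs
    have hβle : |β| ≤ ε / |w.im| := by
      rw [hβeq]
      gcongr
      exact hxim.trans hx.le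
    have hβ2 : |β| ≤ c / 2 := by
      have : (0:ℝ) ≤ ε := hε0.le
      calc |β| ≤ ε / |w.im| := hβle
        _ ≤ ε + ε / |w.im| := by linarith [hε0.le]
        _ = c / 2 := hkey
    have hα2 : |α| ≤ c / 2 := by
      have h1 : |α| ≤ |x.re| + |β| * |w.re| := by
        rw [hαdef]
        calc |x.re - β * w.re| ≤ |x.re| + |β * w.re| := abs_sub _ _
          _ = |x.re| + |β| * |w.re| := by rw [abs_mul]
      have h2 : |β| * |w.re| ≤ ε / |w.im| := by
        calc |β| * |w.re| ≤ |β| * 1 := by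
              apply mul_le_mul_of_nonneg_left hwre (abs_nonneg _)
          _ = |β| := by ring
          _ ≤ ε / |w.im| := hβle
      calc |α| ≤ |x.re| + |β| * |w.re| := h1
        _ ≤ ε + ε / |w.im| := by linarith
        _ = c / 2 := hkey
    have hxrepr : (α : ℂ) + (β : ℂ) * w = x := by
      apply Complex.ext
      · simp only [Complex.add_re, Complex.ofReal_re, Complex.mul_re, Complex.ofReal_im,
          zero_mul, sub_zero]
        rw [hαdef]; ring
      · simp only [Complex.add_im, Complex.ofReal_im, Complex.mul_im, Complex.ofReal_re,
          zero_mul, add_zero, zero_add]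
        rw [hβdef]
        field_simp
    -- targets
    set τ : ℕ → ℝ := fun r =>
      c / 2 + (if r = 0 then α else 0) + (if r = 1 then β else 0) with hτ
    have hτ0 : ∀ r, 0 ≤ τ r := by
      intro r
      have h1 := abs_le.mp hα2
      have h2 := abs_le.mp hβ2
      simp only [hτ]
      split_ifs with e1 e2 <;> simp <;> linarith
    have hτc : ∀ r, τ r ≤ c := by
      intro r
      have h1 := abs_le.mp hα2
      have h2 := abs_le.mp hβ2
      simp only [hτ]
      split_ifs with e1 e2
      · exfalso; omega
      · simp; linarith
      · simp; linarith
      · simp; linarith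
    -- summing the targets
    have hsumτ : ∑ r ∈ Finset.range p, w ^ r * ((τ r : ℝ) : ℂ) = x := by
      have hsplit : ∀ r : ℕ, ((τ r : ℝ) : ℂ)
          = (c / 2 : ℝ) + (if r = 0 then (α:ℂ) else 0) + (if r = 1 then (β:ℂ) else 0) := by
        intro r
        simp only [hτ]
        push_cast [apply_ite (fun y : ℝ => (y : ℂ))]
        ring
      calc ∑ r ∈ Finset.range p, w ^ r * ((τ r : ℝ) : ℂ)
          = ∑ r ∈ Finset.range p, (w ^ r * ((c/2 : ℝ) : ℂ)
            + (if r = 0 then w ^ r * (α:ℂ) else 0) + (if r = 1 then w ^ r * (β:ℂ) else 0)) := by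
            apply Finset.sum_congr rfl
            intro r _
            rw [hsplit r]
            split_ifs <;> ring
        _ = (∑ r ∈ Finset.range p, w ^ r) * ((c/2 : ℝ) : ℂ)
            + (if 0 ∈ Finset.range p then w ^ 0 * (α:ℂ) else 0)
            + (if 1 ∈ Finset.range p then w ^ 1 * (β:ℂ) else 0) := by
            rw [Finset.sum_add_distrib, Finset.sum_add_distrib, ← Finset.sum_mul,
              Finset.sum_ite_eq' (Finset.range p) 0 (fun r => w ^ r * (α:ℂ)),
              Finset.sum_ite_eq' (Finset.range p) 1 (fun r => w ^ r * (β:ℂ))]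
        _ = x := by
            rw [hgeom, if_pos (Finset.mem_range.mpr (by omega)),
              if_pos (Finset.mem_range.mpr (by omega))]
            simp only [zero_mul, zero_add, pow_zero, one_mul, pow_one]
            rw [mul_comm w ((β:ℝ):ℂ)]
            exact hxrepr
    -- apply the greedy lemma in each residue class
    have hgreedy : ∀ r : Fin p, ∃ u : ℕ → ℝ, (∀ n, u n = 0 ∨ u n = 1) ∧
        HasSum (fun k => u k * g (p * k + (r:ℕ))) (τ (r:ℕ)) := by
      intro r
      apply greedy (fun n => (hgpos _).le) (hgsub _ (hinj (r:ℕ))) (fun n => hdom (r:ℕ) n)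
        (hτ0 _)
      have h1 : c ≤ g (p * 0 + (r:ℕ)) := by
        have hrp : (r:ℕ) ≤ p - 1 := by omega
        have hqr : (q:ℝ) ^ (r:ℕ) ≤ q ^ (p-1) := pow_le_pow_right₀ hq1.le hrp
        have h2 : c ≤ ((q:ℝ) ^ (r:ℕ))⁻¹ := by
          rw [hc]
          exact inv_anti₀ (pow_pos hq0 _) hqr
        have h3 : ((q:ℝ) ^ (r:ℕ))⁻¹ ≤ g (p * 0 + (r:ℕ)) := by
          have hidx : p * 0 + (r:ℕ) = (r:ℕ) := by omega
          rw [hidx]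
          simp only [hg]
          rw [inv_eq_one_div]
          gcongr
          exact_mod_cast fib1_pos (r:ℕ)
        linarith
      have h4 : g (p * 0 + (r:ℕ)) ≤ ∑' k, g (p * k + (r:ℕ)) :=
        Summable.le_tsum (hgsub _ (hinj (r:ℕ))) 0 (fun j _ => (hgpos _).le)
      calc τ (r:ℕ) ≤ c := hτc _
        _ ≤ ∑' k, g (p * k + (r:ℕ)) := by linarith
    choose U hU01 hUsum using hgreedy
    -- global control sequence
    set u : ℕ → ℂ := fun n => ((U ⟨n % p, Nat.mod_lt n hp0⟩ (n / p) : ℝ) : ℂ) with hu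
    have hu01 : ∀ n, u n = 0 ∨ u n = 1 := by
      intro n
      rcases hU01 ⟨n % p, Nat.mod_lt n hp0⟩ (n / p) with h | h
      · left; rw [hu]; simp [h]
      · right; rw [hu]; simp [h]
    set F : ℕ → ℂ := fun k => u k * ((fib1 k : ℕ) : ℂ) / z ^ k with hF
    have hFnorm : ∀ n, ‖F n‖ ≤ g n := by
      intro n
      have hzn : ‖z ^ n‖ = q ^ n := by
        rw [norm_pow, habsz]
      have hun : ‖u n‖ ≤ 1 := by
        rcases hu01 n with h | h <;> simp [h]
      rw [hF]
      simp only
      rw [norm_div, norm_mul, hzn]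
      calc ‖u n‖ * ‖((fib1 n : ℕ) : ℂ)‖ / q ^ n ≤ 1 * ‖((fib1 n : ℕ) : ℂ)‖ / q ^ n := by
            gcongr
        _ = (fib1 n : ℝ) / q ^ n := by
            rw [one_mul, Complex.norm_natCast]
        _ = g n := by rw [hg]
    have hFsum : Summable F := Summable.of_norm_bounded hgsum hFnorm
    -- regroup by residue classes
    set E : Fin p × ℕ ≃ ℕ :=
      (Equiv.prodComm (Fin p) ℕ).trans (Nat.divModEquiv p).symm with hE
    have hEapp : ∀ rk : Fin p × ℕ, E rk = rk.2 * p + (rk.1 : ℕ) := fun rk => rfl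
    have hwzr : ∀ r : ℕ, w ^ r * z ^ r = ((q:ℝ):ℂ) ^ r := by
      intro r
      rw [← mul_pow, hwzq]
    have hfiber : ∀ r : Fin p,
        HasSum (fun k : ℕ => F (E (r, k))) (w ^ (r:ℕ) * ((τ (r:ℕ) : ℝ) : ℂ)) := by
      intro r
      have h1 : HasSum (fun k => ((U r k * g (p * k + (r:ℕ)) : ℝ) : ℂ))
          (((τ (r:ℕ) : ℝ)) : ℂ) := Complex.hasSum_ofReal.mpr (hUsum r)
      have h2 := h1.mul_left (w ^ (r:ℕ))
      have hwne : w ≠ 0 := by rw [hwdef]; exact Complex.exp_ne_zero _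
      have heq : ∀ k : ℕ, w ^ (r:ℕ) * ((U r k * g (p * k + (r:ℕ)) : ℝ) : ℂ)
          = F (E (r, k)) := by
        intro k
        have hEk : E (r, k) = p * k + (r:ℕ) := by rw [hEapp (r, k)]; ring
        rw [hEk]
        have hmod : (p * k + (r:ℕ)) % p = (r:ℕ) := by
          rw [Nat.mul_add_mod, Nat.mod_eq_of_lt r.isLt]
        have hdiv : (p * k + (r:ℕ)) / p = k := by
          rw [Nat.mul_add_div hp0, Nat.div_eq_of_lt r.isLt, add_zero]
        have huval : u (p * k + (r:ℕ)) = ((U r k : ℝ) : ℂ) := by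
          simp only [hu, hmod, hdiv, Fin.eta]
        have hzn : z ^ (p * k + (r:ℕ)) = ((q:ℂ)) ^ (p * k) * z ^ (r:ℕ) := by
          rw [pow_add, pow_mul, hzp, ← pow_mul]
        have hzr2 : z ^ (r:ℕ) = ((q:ℂ)) ^ (r:ℕ) * (w ^ (r:ℕ))⁻¹ := by
          rw [eq_comm, mul_inv_eq_iff_eq_mul₀ (pow_ne_zero _ hwne), mul_comm]
          exact (hwzr (r:ℕ)).symm
        simp only [hF, hg]
        rw [huval, hzn, hzr2]
        have hQ : ((q:ℝ):ℂ) ≠ 0 := by exact_mod_cast hqne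
        push_cast
        rw [pow_add]
        field_simp
      rwa [funext heq] at h2
    -- assemble
    have hEsum : Summable (F ∘ E) := E.summable_iff.2 hFsum
    have h2 := hEsum.hasSum
    have h3 : HasSum (fun r : Fin p => w ^ (r:ℕ) * ((τ (r:ℕ) : ℝ) : ℂ))
        (∑' y, (F ∘ E) y) := h2.prod_fiberwise (fun r => hfiber r)
    have h4 := hasSum_fintype (fun r : Fin p => w ^ (r:ℕ) * ((τ (r:ℕ) : ℝ) : ℂ))
    have h5 : (∑' y, (F ∘ E) y) = ∑ r : Fin p, w ^ (r:ℕ) * ((τ (r:ℕ) : ℝ) : ℂ) :=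
      h3.unique h4
    have h6 : HasSum (F ∘ E) (∑ r : Fin p, w ^ (r:ℕ) * ((τ (r:ℕ) : ℝ) : ℂ)) :=
      h5 ▸ h2
    have h7 : HasSum F (∑ r : Fin p, w ^ (r:ℕ) * ((τ (r:ℕ) : ℝ) : ℂ)) :=
      E.hasSum_iff.1 h6
    have h8 : (∑ r : Fin p, w ^ (r:ℕ) * ((τ (r:ℕ) : ℝ) : ℂ)) = x := by
      rw [Fin.sum_univ_eq_sum_range (fun r => w ^ r * ((τ r : ℝ) : ℂ)) p]
      exact hsumτ
    exact ⟨u, hu01, h8 ▸ h7⟩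
  -- PART 2 : R ⊆ W
  have hRW : R ⊆ W := by
    rintro x ⟨u, hu01, hsum⟩
    refine ⟨fun n => if u n = 0 then 0 else 1, fun n => if n = 0 then 0 else 1,
      fun n => ?_, fun n => ?_, ?_⟩
    · by_cases h : u n = 0 <;> simp [h]
    · by_cases h : n = 0 <;> simp [h]
    · have hvs : ∀ k : ℕ, (∑ j ∈ Finset.range (k+1),
          (if j = 0 then (0:ℝ) else 1)) = (k : ℝ) := by
        intro k
        induction k with
        | zero => simp
        | succ k ih =>
          rw [Finset.sum_range_succ, ih, if_neg (by omega)]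
          push_cast
          ring
      have hterm : ∀ k : ℕ,
          (((if u k = 0 then (0:ℝ) else 1) * (fib1 k : ℝ) / q ^ k : ℝ) : ℂ) *
            Complex.exp (-Complex.I * ((ω : ℝ) : ℂ) *
              ((∑ j ∈ Finset.range (k + 1), (if j = 0 then (0:ℝ) else 1) : ℝ) : ℂ))
          = u k * ((fib1 k : ℕ) : ℂ) / z ^ k := by
        intro k
        rw [hvs k]
        have hωθ : (ω : ℝ) = θ := rfl
        have hzk : z ^ k = ((q:ℂ)) ^ k * Complex.exp ((k : ℂ) * ((θ:ℂ) * Complex.I)) := by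
          rw [hzdef, mul_pow, ← Complex.exp_nat_mul]
        have hexpne : Complex.exp ((k : ℂ) * ((θ:ℂ) * Complex.I)) ≠ 0 :=
          Complex.exp_ne_zero _
        have hQk : ((q:ℂ)) ^ k ≠ 0 := pow_ne_zero _ (by exact_mod_cast hqne)
        have hexparg : -Complex.I * ((ω : ℝ) : ℂ) * ((k:ℝ) : ℂ)
            = -((k : ℂ) * ((θ:ℂ) * Complex.I)) := by
          rw [hωθ]
          push_cast
          ring
        rw [hexparg, Complex.exp_neg, hzk]
        rcases hu01 k with h | h
        · rw [h]
          push_cast [h]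
          simp
        · rw [h]
          push_cast [h]
          field_simp
          simp
      have : (fun k => (((if u k = 0 then (0:ℝ) else 1) * (fib1 k : ℝ) / q ^ k : ℝ) : ℂ) *
            Complex.exp (-Complex.I * ((ω : ℝ) : ℂ) *
              ((∑ j ∈ Finset.range (k + 1), (if j = 0 then (0:ℝ) else 1) : ℝ) : ℂ)))
          = (fun k => u k * ((fib1 k : ℕ) : ℂ) / z ^ k) := funext hterm
      rw [this]
      exact hsum
  exact ⟨⟨ε, hε0, hball⟩, hRW, ⟨ε, hε0, fun y hy => hRW (hball hy)⟩⟩
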